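/- Let q > 1 be a real number, r ≥ 1, g ≥ 2 integers, and let β : ℤ → ℝ be a function satisfying β(d + r) = β(d) for all d. Then for any complex s with Re(s) > 1, the series ∑_{d ≥ r(2g-2)+1} β(d) · (q^{d - r(g-1)} - 1) · q^{-s·d} converges absolutely, and its sum equals ∑_{i=1}^{r} β(i) · q^{-s·i} · ( q^{i - r(g-1)} · q^{(1-s)·r(2g-2)} / (1 - q^{(1-s)·r}) − q^{-s·r(2g-2)} / (1 - q^{-s·r}) ). -/

import Mathlib

/-!
Split the summation index as `d = r(2g-2) + 1 + k`. With `z = q^{-s}` and `u = q^{1-s}`, both of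
modulus `< 1` when `Re s > 1`, the summand is `q^{-r(g-1)} β(d) u^d - β(d) z^d`, and `β(d)` is
`r`-periodic in `k` with `β(r(2g-2) + 1 + k) = β(k + 1)`. A periodic sequence times a geometric
sequence `u^k` sums to its sum over one period divided by `1 - u^r`.
-/

open Complex Finset

section PeriodicGeometric

variable {𝕜 : Type*} [NormedField 𝕜] [CompleteSpace 𝕜] {β : ℕ → 𝕜} {r : ℕ} {u : 𝕜}

theorem Function.Periodic.summable_mul_geometric (hβ : Function.Periodic β r) (hr : 0 < r)
    (hu : ‖u‖ < 1) : Summable fun k => β k * u ^ k := by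
  have hbound : ∀ k, ‖β k‖ ≤ ∑ i ∈ range r, ‖β i‖ := fun k => by
    rw [← hβ.map_mod_nat k]
    exact single_le_sum (fun i _ => norm_nonneg (β i)) (mem_range.mpr (Nat.mod_lt k hr))
  refine Summable.of_norm_bounded
    ((summable_geometric_of_lt_one (norm_nonneg u) hu).mul_left (∑ i ∈ range r, ‖β i‖)) fun k => ?_
  rw [norm_mul, norm_pow]
  exact mul_le_mul_of_nonneg_right (hbound k) (by positivity)

/-- Shifting by one period multiplies the series by `u ^ r`, so its sum `S` satisfies
`S = P + u ^ r * S`, where `P` is the sum over the first period. -/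
theorem Function.Periodic.hasSum_mul_geometric (hβ : Function.Periodic β r) (hr : 0 < r)
    (hu : ‖u‖ < 1) :
    HasSum (fun k => β k * u ^ k) ((∑ i ∈ range r, β i * u ^ i) / (1 - u ^ r)) := by
  have hsum := hβ.summable_mul_geometric hr hu
  have hur : 1 - u ^ r ≠ 0 := by
    refine sub_ne_zero.mpr fun h => ?_
    have : ‖u‖ ^ r < 1 := pow_lt_one₀ (norm_nonneg u) hu hr.ne'
    rw [← norm_pow, ← h, norm_one] at this
    exact this.false
  have hshift : ∑' k, β (k + r) * u ^ (k + r) = u ^ r * ∑' k, β k * u ^ k := by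
    rw [← tsum_mul_left]
    exact tsum_congr fun k => by rw [hβ k, pow_add]; ring
  have hsplit := hsum.sum_add_tsum_nat_add r
  rw [hshift] at hsplit
  convert hsum.hasSum using 1
  rw [div_eq_iff hur]
  linear_combination hsplit

end PeriodicGeometric

theorem Complex.norm_ofReal_cpow_lt_one {q : ℝ} (hq : 1 < q) {w : ℂ} (hw : w.re < 0) :
    ‖(q : ℂ) ^ w‖ < 1 := by
  rw [norm_cpow_eq_rpow_re_of_pos (zero_lt_one.trans hq)]
  exact Real.rpow_lt_one_of_one_lt_of_neg hq hw

theorem Complex.ofReal_cpow_one_sub {q : ℝ} (hq : q ≠ 0) (s : ℂ) :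
    (q : ℂ) ^ (1 - s) = q * (q : ℂ) ^ (-s) := by
  rw [cpow_sub _ _ (ofReal_ne_zero.mpr hq), cpow_one, cpow_neg, div_eq_mul_inv]

theorem Complex.ofReal_zpow_sub_sub_one_mul_cpow {q : ℝ} (hq : q ≠ 0) (n : ℕ) (c : ℤ) (s : ℂ) :
    ((q : ℂ) ^ ((n : ℤ) - c) - 1) * (q : ℂ) ^ (-s * n)
      = ((q : ℂ) ^ (1 - s)) ^ n / (q : ℂ) ^ c - ((q : ℂ) ^ (-s)) ^ n := by
  rw [zpow_sub₀ (ofReal_ne_zero.mpr hq), zpow_natCast, cpow_mul_nat, ofReal_cpow_one_sub hq]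
  ring

/-- §1.2.2: convergence and evaluation of the tail of the rank-r non-abelian zeta function.
For q > 1, r ≥ 1, g ≥ 2 and β : ℤ → ℝ periodic with period r, the series
∑_{d ≥ r(2g-2)+1} β(d)(q^{d-r(g-1)} − 1) q^{-sd} converges absolutely for Re(s) > 1 and
equals the stated closed form. -/
theorem stmt_0 (q : ℝ) (hq : 1 < q) (r g : ℕ) (hr : 1 ≤ r) (hg : 2 ≤ g)
    (β : ℤ → ℝ) (hβ : ∀ d : ℤ, β (d + r) = β d) (s : ℂ) (hs : 1 < s.re) :
    (Summable fun k : ℕ =>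
      ‖(β ((r : ℤ)*(2*g-2)+1+k) : ℂ)
          * ((q : ℂ) ^ (((r : ℤ)*(2*g-2)+1+k) - (r : ℤ)*(g-1)) - 1)
          * (q : ℂ) ^ (-s * ((((r : ℤ)*(2*g-2)+1+k) : ℤ) : ℂ))‖) ∧
    (∑' k : ℕ, (β ((r : ℤ)*(2*g-2)+1+k) : ℂ)
          * ((q : ℂ) ^ (((r : ℤ)*(2*g-2)+1+k) - (r : ℤ)*(g-1)) - 1)
          * (q : ℂ) ^ (-s * ((((r : ℤ)*(2*g-2)+1+k) : ℤ) : ℂ)))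
      = ∑ i ∈ Finset.Icc 1 r, (β (i : ℤ) : ℂ) * (q : ℂ) ^ (-s * (i : ℂ)) *
          ( (q : ℂ) ^ ((i : ℤ) - (r : ℤ)*(g-1))
              * (q : ℂ) ^ ((1-s) * ((r*(2*g-2) : ℕ) : ℂ)) / (1 - (q : ℂ) ^ ((1-s) * (r : ℂ)))
            - (q : ℂ) ^ ((-s) * ((r*(2*g-2) : ℕ) : ℂ)) / (1 - (q : ℂ) ^ ((-s) * (r : ℂ))) ) := by
  have hq_ne : q ≠ 0 := (zero_lt_one.trans hq).ne'
  have hq0 : (q : ℂ) ≠ 0 := ofReal_ne_zero.mpr hq_ne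
  set N := r * (2 * g - 2) with hN
  have hNcast : (r : ℤ) * (2 * g - 2) = N := by
    rw [hN]; push_cast [Nat.cast_sub (by omega : 2 ≤ 2 * g)]; ring
  set z := (q : ℂ) ^ (-s) with hz_def
  set u := (q : ℂ) ^ (1 - s) with hu_def
  have hz : ‖z‖ < 1 := norm_ofReal_cpow_lt_one hq (by rw [neg_re]; linarith)
  have hu : ‖u‖ < 1 := norm_ofReal_cpow_lt_one hq (by rw [sub_re, one_re]; linarith)
  have huz : u = q * z := ofReal_cpow_one_sub hq_ne s
  set b : ℕ → ℂ := fun k => (β ((r : ℤ) * (2 * g - 2) + 1 + k) : ℂ) with hb_def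
  have hb : Function.Periodic b r := fun k => by
    simp only [hb_def, Nat.cast_add, ← add_assoc, hβ]
  have hsum := ((hb.hasSum_mul_geometric hr hu).mul_left
      (u ^ (N + 1) / (q : ℂ) ^ ((r : ℤ) * (g - 1)))).sub
    ((hb.hasSum_mul_geometric hr hz).mul_left (z ^ (N + 1)))
  have hterm : ∀ k : ℕ, b k * ((q : ℂ) ^ (((r : ℤ) * (2 * g - 2) + 1 + k) - (r : ℤ) * (g - 1)) - 1)
        * (q : ℂ) ^ (-s * ((((r : ℤ) * (2 * g - 2) + 1 + k) : ℤ) : ℂ))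
      = u ^ (N + 1) / (q : ℂ) ^ ((r : ℤ) * (g - 1)) * (b k * u ^ k)
        - z ^ (N + 1) * (b k * z ^ k) := fun k => by
    have hd : (r : ℤ) * (2 * g - 2) + 1 + k = ((N + 1 + k : ℕ) : ℤ) := by
      rw [hNcast]; push_cast; ring
    rw [hd, Int.cast_natCast, mul_assoc, ofReal_zpow_sub_sub_one_mul_cpow hq_ne _ _ s]
    ring
  simp only [← hterm] at hsum
  refine ⟨summable_norm_iff.mpr hsum.summable, hsum.tsum_eq.trans ?_⟩
  rw [← Ico_add_one_right_eq_Icc, sum_Ico_eq_sum_range, Nat.add_sub_cancel, sum_div, sum_div,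
    mul_sum, mul_sum, ← sum_sub_distrib]
  refine sum_congr rfl fun i _ => ?_
  have hbi : b i = β ((1 + i : ℕ) : ℤ) := by
    rw [← Function.Periodic.nat_mul hβ (2 * g - 2) ((1 + i : ℕ) : ℤ), hb_def]
    simp only [hNcast, hN]
    push_cast
    ring_nf
  simp only [hbi, cpow_mul_nat, ← hz_def, ← hu_def, zpow_sub₀ hq0, zpow_natCast, huz]
  ring
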